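/- Let Λ = Δ + ½ ξ·∇ + 1 be the differential operator on smooth vector fields on ℝ³, let G(ξ) = (4π)^{-3/2} e^{-|ξ|²/4}, and f_i(ξ) = ½(e_i × ξ) G(ξ). Then Λ f_i = − f_i for i = 1,2,3; that is, each f_i is an eigenfunction of Λ with eigenvalue −1. -/

import Mathlib

open Real MeasureTheory

/-- Partial derivative in the `i`-th coordinate direction. -/
noncomputable def pd (i : Fin 3) (f : (Fin 3 → ℝ) → ℝ) (x : Fin 3 → ℝ) : ℝ :=
  fderiv ℝ f x (Pi.single i 1)

/-- The curl of a vector field on `ℝ³`. -/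
noncomputable def curl3 (v : (Fin 3 → ℝ) → (Fin 3 → ℝ)) (x : Fin 3 → ℝ) : Fin 3 → ℝ :=
  ![pd 1 (fun y => v y 2) x - pd 2 (fun y => v y 1) x,
    pd 2 (fun y => v y 0) x - pd 0 (fun y => v y 2) x,
    pd 0 (fun y => v y 1) x - pd 1 (fun y => v y 0) x]

/-- The divergence of a vector field on `ℝ³`. -/
noncomputable def div3 (v : (Fin 3 → ℝ) → (Fin 3 → ℝ)) (x : Fin 3 → ℝ) : ℝ :=
  ∑ i, pd i (fun y => v y i) x

/-- The cross product on `ℝ³`. -/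
def cross3 (a b : Fin 3 → ℝ) : Fin 3 → ℝ :=
  ![a 1 * b 2 - a 2 * b 1, a 2 * b 0 - a 0 * b 2, a 0 * b 1 - a 1 * b 0]

/-- The Gaussian `G(ξ) = (4π)^{-3/2} exp(-|ξ|²/4)`. -/
noncomputable def G3 (ξ : Fin 3 → ℝ) : ℝ :=
  (4 * π) ^ (-(3 : ℝ) / 2) * Real.exp (-(∑ i, ξ i ^ 2) / 4)

/-- `p_i(ξ) = ½ (e_i × ξ)`. -/
noncomputable def pvec (i : Fin 3) (ξ : Fin 3 → ℝ) : Fin 3 → ℝ :=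
  (1 / 2 : ℝ) • cross3 (Pi.single i 1) ξ

/-- `f_i = p_i G`. -/
noncomputable def fvec (i : Fin 3) (ξ : Fin 3 → ℝ) : Fin 3 → ℝ := G3 ξ • pvec i ξ

/-- The Laplacian of a scalar function on `ℝ³`. -/
noncomputable def lap3 (f : (Fin 3 → ℝ) → ℝ) (x : Fin 3 → ℝ) : ℝ :=
  ∑ i, pd i (pd i f) x

/-- The operator `Λ = Δ + ½ ξ·∇ + 1` acting on scalar functions. -/
noncomputable def Lam (f : (Fin 3 → ℝ) → ℝ) (x : Fin 3 → ℝ) : ℝ :=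
  lap3 f x + (1 / 2) * ∑ j, x j * pd j f x + f x

/-- The formal adjoint `Λ* = Δ − ½ ξ·∇ − ½` acting on scalar functions. -/
noncomputable def LamStar (f : (Fin 3 → ℝ) → ℝ) (x : Fin 3 → ℝ) : ℝ :=
  lap3 f x - (1 / 2) * ∑ j, x j * pd j f x - (1 / 2) * f x

/-! Each component of `f_i` is `ℓ G` for the linear form `ℓ ξ = ½ (e_i × ξ)_k`. Since
`∇G = -ξ G / 2`, one finds `Λ G = -G / 2`, and for linear `ℓ` Euler's identity `ξ · ∇ℓ = ℓ` gives
`Λ (ℓ G) = ℓ Λ G + 2 ∇ℓ · ∇G + ½ (ξ · ∇ℓ) G = ℓ Λ G - ℓ G + ½ ℓ G = -ℓ G`. -/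

theorem hasFDerivAt_G3 (x : Fin 3 → ℝ) :
    HasFDerivAt G3
      (-(G3 x / 2) • ∑ i, x i • (ContinuousLinearMap.proj i : (Fin 3 → ℝ) →L[ℝ] ℝ)) x := by
  have hsq : HasFDerivAt (fun y : Fin 3 → ℝ => ∑ i, y i ^ 2)
      (∑ i, (2 * x i) • (ContinuousLinearMap.proj i : (Fin 3 → ℝ) →L[ℝ] ℝ)) x :=
    HasFDerivAt.fun_sum fun i _ => by
      simpa using (ContinuousLinearMap.proj (R := ℝ) (φ := fun _ : Fin 3 => ℝ) i).hasFDerivAt.pow 2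
  have hG : G3 = fun y => (4 * π) ^ (-(3 : ℝ) / 2) * Real.exp ((-∑ i, y i ^ 2) * 4⁻¹) := by
    funext y; simp [G3, div_eq_mul_inv]
  rw [hG]
  refine ((hsq.fun_neg.mul_const (4⁻¹ : ℝ)).exp.const_mul _).congr_fderiv ?_
  ext v
  simp only [smul_apply, neg_apply, sum_apply, ContinuousLinearMap.proj_apply, smul_eq_mul,
    Finset.mul_sum, ← Finset.sum_neg_distrib]
  exact Finset.sum_congr rfl fun i _ => by ring

theorem pd_mul_G3 {P : (Fin 3 → ℝ) → ℝ} {L : (Fin 3 → ℝ) →L[ℝ] ℝ} {x : Fin 3 → ℝ}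
    (hP : HasFDerivAt P L x) (j : Fin 3) :
    pd j (fun y => P y * G3 y) x = (L (Pi.single j 1) - P x * x j / 2) * G3 x := by
  rw [pd, (hP.fun_mul (hasFDerivAt_G3 x)).fderiv]
  simp only [add_apply, smul_apply, sum_apply, ContinuousLinearMap.proj_apply, Pi.single_apply,
    smul_eq_mul, mul_ite, mul_one, mul_zero, Finset.sum_ite_eq', Finset.mem_univ, if_true]
  ring

theorem pd_linear_mul_G3 (ℓ : (Fin 3 → ℝ) →ₗ[ℝ] ℝ) (j : Fin 3) :
    pd j (fun y => ℓ y * G3 y) = fun x => (ℓ (Pi.single j 1) - ℓ x * x j / 2) * G3 x :=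
  funext fun _ => pd_mul_G3 ℓ.toContinuousLinearMap.hasFDerivAt j

theorem pd_pd_linear_mul_G3 (ℓ : (Fin 3 → ℝ) →ₗ[ℝ] ℝ) (j : Fin 3) (x : Fin 3 → ℝ) :
    pd j (pd j fun y => ℓ y * G3 y) x =
      (-(x j * ℓ (Pi.single j 1) + ℓ x) / 2 - (ℓ (Pi.single j 1) - ℓ x * x j / 2) * x j / 2)
        * G3 x := by
  have hℓ := ℓ.toContinuousLinearMap.hasFDerivAt (x := x)
  have hP := HasFDerivAt.const_sub
    (HasFDerivAt.mul_const (HasFDerivAt.fun_mul hℓ (hasFDerivAt_apply j x)) 2⁻¹) (ℓ (Pi.single j 1))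
  simp only [← div_eq_mul_inv, LinearMap.coe_toContinuousLinearMap'] at hP
  rw [pd_linear_mul_G3, pd_mul_G3 hP]
  simp only [add_apply, neg_apply, smul_apply, LinearMap.coe_toContinuousLinearMap', smul_eq_mul,
    ContinuousLinearMap.proj_apply, Pi.single_eq_same]
  ring

theorem Lam_linear_mul_G3 (ℓ : (Fin 3 → ℝ) →ₗ[ℝ] ℝ) (ξ : Fin 3 → ℝ) :
    Lam (fun y => ℓ y * G3 y) ξ = -(ℓ ξ * G3 ξ) := by
  have hℓ : ℓ ξ = ∑ j, ξ j * ℓ (Pi.single j 1) := by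
    simp [LinearMap.pi_apply_eq_sum_univ ℓ ξ, ← Pi.single_apply, Pi.single_comm]
  simp only [Lam, lap3, pd_pd_linear_mul_G3, Fin.sum_univ_three] at hℓ ⊢
  simp only [pd_linear_mul_G3]
  linear_combination G3 ξ / 2 * hℓ

theorem fvec_apply (i k : Fin 3) (y : Fin 3 → ℝ) :
    fvec i y k = ((1 / 2 : ℝ) • (LinearMap.proj k ∘ₗ crossProduct (Pi.single i 1))) y * G3 y := by
  have hcross : cross3 (Pi.single i 1) y = crossProduct (Pi.single i 1) y := (cross_apply _ _).symm
  simp only [fvec, pvec, hcross, Pi.smul_apply, smul_eq_mul, LinearMap.smul_apply,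
    LinearMap.comp_apply, LinearMap.coe_proj, Function.eval]
  ring

theorem stmt9 (i k : Fin 3) (ξ : Fin 3 → ℝ) :
    Lam (fun y => fvec i y k) ξ = - fvec i ξ k := by
  simpa only [fvec_apply] using Lam_linear_mul_G3 _ ξ
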